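/- Strict inequality between the logarithmic moment generating functions: if c is a bounded measurable nonnegative function on 𝕋 that is not ℓ-a.e. constant on 𝕋₁ (where ℓ(𝕋₁) = 1/3), then for every θ > 0 one has ∫_{𝕋₁} e^{θc(x)} dx + 2/3 − 3∫_{𝕋₁} e^{θc(x)/3} dx > 0; equivalently, Λ(θ/3) < Λ̄(θ) for all θ > 0. -/

import Mathlib

open MeasureTheory Filter Asymptotics

noncomputable section

namespace LoadOpt

/-- `j = e^{2iπ/3}`, primitive cube root of unity. -/
def jc : ℂ := Complex.exp (2 * Real.pi * Complex.I / 3)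

/-- `λ = 2 (3√3)^{-1/2}`. -/
def lam : ℝ := 2 / Real.sqrt (3 * Real.sqrt 3)

/-- The bins `B₁, B₂, B₃` (indexed by `0, 1, 2`). -/
def Bin : Fin 3 → ℂ := ![jc ^ 2 * (lam * Complex.I), (lam : ℂ) * Complex.I, jc * (lam * Complex.I)]

/-- The triangle `𝕋`, convex hull of the three bins. -/
def Tri : Set ℂ := convexHull ℝ {Bin 0, Bin 1, Bin 2}

/-- Cost functions `c₁, c₂, c₃` (indexed by `0, 1, 2`). -/
def costs (c : ℂ → ℝ) : Fin 3 → ℂ → ℝ := ![c, fun x => c (jc ^ 2 * x), fun x => c (jc * x)]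

/-- Half-lines removed to make the Voronoi cells a partition: `D₁ = {ijt : t < 0}`,
`D_l = {ij^l t : t ≤ 0}` for `l = 2, 3`. -/
def Dl : Fin 3 → Set ℂ :=
  ![{z | ∃ t : ℝ, t < 0 ∧ z = Complex.I * jc * t},
    {z | ∃ t : ℝ, t ≤ 0 ∧ z = Complex.I * jc ^ 2 * t},
    {z | ∃ t : ℝ, t ≤ 0 ∧ z = Complex.I * jc ^ 3 * t}]

/-- The Voronoi cells `𝕋₁, 𝕋₂, 𝕋₃` (indexed by `0, 1, 2`). -/
def cell (l : Fin 3) : Set ℂ :=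
  {x ∈ Tri | dist x (Bin l) = ⨅ m : Fin 3, dist x (Bin m)} \ Dl l

/-- The load `ρₙ(A)` of the allocation `A` of the points `x 0, …, x (n-1)`. -/
def load (c : ℂ → ℝ) {n : ℕ} (x : Fin n → ℂ) (A : Fin n → Fin 3) : ℝ :=
  Finset.univ.sup' Finset.univ_nonempty fun l => ∑ k, if A k = l then costs c l (x k) else 0

/-- The optimal load `ρₙ`. -/
def optLoad (c : ℂ → ℝ) {n : ℕ} (x : Fin n → ℂ) : ℝ :=
  Finset.univ.inf' Finset.univ_nonempty fun A : Fin n → Fin 3 => load c x A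

/-- The suboptimal load `ρ̄ₙ`, allocating each point to the bin of its Voronoi cell. -/
def subLoad (c : ℂ → ℝ) {n : ℕ} (x : Fin n → ℂ) : ℝ :=
  Finset.univ.sup' Finset.univ_nonempty fun l => ∑ k, (cell l).indicator (costs c l) (x k)

/-- `γ = ∫_{𝕋₁} c`. -/
def gamma (c : ℂ → ℝ) : ℝ := ∫ x in cell 0, c x

/-- Assumption (C1). -/
def C1 (c : ℂ → ℝ) : Prop :=
  ∀ x ∈ Tri, ∀ l : Fin 3, l ≠ 0 → dist x (Bin 0) < dist x (Bin l) → costs c 0 x < costs c l x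

/-- Assumption (C2): symmetry of `c` w.r.t. the line through `0` and `B₁`, plus a Lipschitz
property near `D₁ ∪ D₃`. -/
def C2 (c : ℂ → ℝ) : Prop :=
  (∀ θ ∈ Set.Icc (0 : ℝ) (2 * Real.pi), ∀ t : ℝ, 0 < t →
      (t : ℂ) * Complex.exp ((θ : ℂ) * Complex.I) ∈ Tri →
      c ((t : ℂ) * Complex.exp ((θ : ℂ) * Complex.I))
        = c ((t : ℂ) * Complex.exp (((-θ - Real.pi / 3 : ℝ) : ℂ) * Complex.I))) ∧
  ∃ (K : NNReal) (U : Set ℂ), IsOpen U ∧ Dl 0 ∪ Dl 2 ⊆ U ∧ LipschitzOnWith K c U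

/-- `Λ(θ) = log (3 ∫_{𝕋₁} e^{θ c})`. -/
def Lambda (c : ℂ → ℝ) (θ : ℝ) : ℝ := Real.log (3 * ∫ x in cell 0, Real.exp (θ * c x))

/-- The Fenchel–Legendre transform `Λ*`. -/
def LambdaStar (c : ℂ → ℝ) (y : ℝ) : EReal := ⨆ θ : ℝ, ((θ * y - Lambda c θ : ℝ) : EReal)

/-- `Λ̄(θ) = log (∫_{𝕋₁} e^{θ c} + 2/3)`. -/
def LambdaBar (c : ℂ → ℝ) (θ : ℝ) : ℝ :=
  Real.log ((∫ x in cell 0, Real.exp (θ * c x)) + 2 / 3)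

/-- The Fenchel–Legendre transform `Λ̄*`. -/
def LambdaBarStar (c : ℂ → ℝ) (y : ℝ) : EReal := ⨆ θ : ℝ, ((θ * y - LambdaBar c θ : ℝ) : EReal)

/-- Assumption (C5): `c(B₁) < c(x) < c(0)` on `𝕋₁ \ {0, B₁}`. -/
def C5 (c : ℂ → ℝ) : Prop :=
  ∀ x ∈ cell 0, x ≠ 0 → x ≠ Bin 0 → c (Bin 0) < c x ∧ c x < c 0

/-!
Pointwise, `3 e^{t/3} ≤ e^t + 2` is AM–GM for `e^t, 1, 1`, with equality only at `t = 0`.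
Integrating over `𝕋₁` with `t = θc` gives `3∫_{𝕋₁} e^{θc/3} < ∫_{𝕋₁} e^{θc} + 2ℓ(𝕋₁)`,
strictly because `θc` is not a.e. zero there. It remains to see `ℓ(𝕋₁) ≤ 1/3`: the closed
Voronoi cells of the vertices inside `𝕋` are permuted by the rotation `z ↦ jz`, overlap only on
perpendicular bisectors, and `ℓ(𝕋) ≤ 1`, as one computes by slicing `𝕋` horizontally.
-/

lemma exp_add_two_sub_three_mul_exp_div_three (t : ℝ) :
    Real.exp t + 2 - 3 * Real.exp (t / 3) =
      (Real.exp (t / 3) - 1) ^ 2 * (Real.exp (t / 3) + 2) := by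
  rw [show Real.exp t = Real.exp (t / 3) ^ 3 by rw [← Real.exp_nat_mul]; ring_nf]
  ring

lemma three_mul_exp_div_three_le (t : ℝ) : 3 * Real.exp (t / 3) ≤ Real.exp t + 2 := by
  have := exp_add_two_sub_three_mul_exp_div_three t
  have : 0 ≤ Real.exp t + 2 - 3 * Real.exp (t / 3) := by rw [this]; positivity
  linarith

lemma three_mul_exp_div_three_lt {t : ℝ} (ht : t ≠ 0) : 3 * Real.exp (t / 3) < Real.exp t + 2 := by
  have hne : Real.exp (t / 3) - 1 ≠ 0 := by
    rw [sub_ne_zero, Ne, Real.exp_eq_one_iff]; exact div_ne_zero ht three_ne_zero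
  have := exp_add_two_sub_three_mul_exp_div_three t
  have : 0 < Real.exp t + 2 - 3 * Real.exp (t / 3) := by rw [this]; positivity
  linarith

section Integral

variable {α : Type*} [MeasurableSpace α] {μ : Measure α} [IsFiniteMeasure μ] {g : α → ℝ} {M : ℝ}

lemma integrable_exp_of_ae_le (hg : AEMeasurable g μ) (hM : ∀ᵐ x ∂μ, g x ≤ M) :
    Integrable (fun x => Real.exp (g x)) μ :=
  .of_bound (Real.measurable_exp.comp_aemeasurable hg).aestronglyMeasurable (Real.exp M) <|
    hM.mono fun x hx => by rw [Real.norm_eq_abs, Real.abs_exp]; exact Real.exp_le_exp.2 hx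

lemma three_mul_integral_exp_div_three_lt (hg : AEMeasurable g μ)
    (hM : ∀ᵐ x ∂μ, g x ≤ M) (hg0 : ¬ g =ᵐ[μ] 0) :
    3 * ∫ x, Real.exp (g x / 3) ∂μ < ∫ x, Real.exp (g x) ∂μ + 2 * μ.real Set.univ := by
  have h1 := integrable_exp_of_ae_le hg hM
  have h3 : Integrable (fun x => Real.exp (g x / 3)) μ :=
    integrable_exp_of_ae_le (M := M / 3) (hg.div_const 3) (hM.mono fun x hx => by linarith)
  have h12 : Integrable (fun x => Real.exp (g x) + 2) μ := h1.add (integrable_const 2)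
  have hsupp : Function.support (fun x => Real.exp (g x) + 2 - 3 * Real.exp (g x / 3))
      = {x | g x ≠ 0} := by
    ext x
    refine ⟨fun h hx => h (by norm_num [hx]), fun hx => ?_⟩
    exact (sub_pos.2 (three_mul_exp_div_three_lt hx)).ne'
  have hpos : 0 < ∫ x, (Real.exp (g x) + 2 - 3 * Real.exp (g x / 3)) ∂μ := by
    rw [integral_pos_iff_support_of_nonneg (fun x => sub_nonneg.2 (three_mul_exp_div_three_le _))
      (h12.sub (h3.const_mul 3)), hsupp, pos_iff_ne_zero]
    exact fun h => hg0 (ae_iff.2 (by simpa using h))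
  rw [integral_sub h12 (h3.const_mul 3), integral_add h1 (integrable_const 2),
    integral_const, integral_const_mul, smul_eq_mul] at hpos
  linarith

end Integral

section Voronoi

variable {ι E : Type*}

def voronoiCell [PseudoMetricSpace E] (p : ι → E) (i : ι) : Set E :=
  {x | ∀ j, dist x (p i) ≤ dist x (p j)}

lemma isClosed_voronoiCell [PseudoMetricSpace E] (p : ι → E) (i : ι) :
    IsClosed (voronoiCell p i) := by
  simp only [voronoiCell, Set.ofPred_forall]
  exact isClosed_iInter fun j =>
    isClosed_le (continuous_id.dist continuous_const) (continuous_id.dist continuous_const)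

lemma preimage_voronoiCell [PseudoMetricSpace E] {p : ι → E} {e : E → E} (he : Isometry e)
    {σ : ι → ι} (hσ : Function.Surjective σ) (hp : ∀ i, e (p i) = p (σ i)) (i : ι) :
    e ⁻¹' voronoiCell p (σ i) = voronoiCell p i := by
  ext x
  simp only [voronoiCell, Set.mem_preimage, Set.mem_ofPred_eq]
  rw [hσ.forall]
  simp only [← hp, he.dist_eq]

lemma voronoiCell_inter_subset_perpBisector [NormedAddCommGroup E] [InnerProductSpace ℝ E]
    (p : ι → E) (i j : ι) :
    voronoiCell p i ∩ voronoiCell p j ⊆ AffineSubspace.perpBisector (p i) (p j) :=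
  fun _ ⟨hi, hj⟩ => AffineSubspace.mem_perpBisector_iff_dist_eq.2 (le_antisymm (hi j) (hj i))

lemma pairwise_aedisjoint_voronoiCell [NormedAddCommGroup E] [InnerProductSpace ℝ E]
    [FiniteDimensional ℝ E] [MeasurableSpace E] [BorelSpace E] (μ : Measure E)
    [μ.IsAddHaarMeasure] {p : ι → E} (hp : Function.Injective p) :
    Pairwise fun i j => AEDisjoint μ (voronoiCell p i) (voronoiCell p j) := fun i j hij =>
  measure_mono_null (voronoiCell_inter_subset_perpBisector p i j)
    (Measure.addHaar_affineSubspace μ _ (by simpa using hp.ne hij))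

end Voronoi

lemma volume_region_between_cc_eq_lintegral {α : Type*} [MeasurableSpace α] {μ : Measure α}
    {f g : α → ℝ} {s : Set α} (hf : Measurable f) (hg : Measurable g) (hs : MeasurableSet s) :
    μ.prod volume {p : α × ℝ | p.1 ∈ s ∧ p.2 ∈ Set.Icc (f p.1) (g p.1)} =
      ∫⁻ x in s, ENNReal.ofReal (g x - f x) ∂μ := by
  rw [Measure.prod_apply (measurableSet_region_between_cc hf hg hs), ← lintegral_indicator hs]
  refine lintegral_congr fun x => ?_
  by_cases hx : x ∈ s
  · rw [Set.indicator_of_mem hx, ← Real.volume_Icc]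
    congr 1
    ext y
    simp [hx]
  · simp [hx]

lemma sqrt_three_mul_self : Real.sqrt 3 * Real.sqrt 3 = 3 := Real.mul_self_sqrt (by norm_num)

lemma lam_pos : 0 < lam := div_pos two_pos (Real.sqrt_pos.2 (by positivity))

lemma lam_mul_self : lam * lam = 4 / (3 * Real.sqrt 3) := by
  rw [lam, div_mul_div_comm, Real.mul_self_sqrt (by positivity)]; norm_num

lemma jc_eq_exp_ofReal_mul_I : jc = Complex.exp ((2 * Real.pi / 3 : ℝ) * Complex.I) := by
  rw [jc]; push_cast; ring_nf

lemma jc_re : jc.re = -(1 / 2) := by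
  rw [jc_eq_exp_ofReal_mul_I, Complex.exp_ofReal_mul_I_re,
    show 2 * Real.pi / 3 = Real.pi - Real.pi / 3 by ring, Real.cos_pi_sub, Real.cos_pi_div_three]

lemma jc_im : jc.im = Real.sqrt 3 / 2 := by
  rw [jc_eq_exp_ofReal_mul_I, Complex.exp_ofReal_mul_I_im,
    show 2 * Real.pi / 3 = Real.pi - Real.pi / 3 by ring, Real.sin_pi_sub, Real.sin_pi_div_three]

lemma jc_pow_three : jc ^ 3 = 1 := by
  rw [jc, ← Complex.exp_nat_mul, ← Complex.exp_two_pi_mul_I]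
  push_cast; ring_nf

lemma Bin_re_im :
    (Bin 0).re = Real.sqrt 3 * lam / 2 ∧ (Bin 0).im = -(lam / 2) ∧
    (Bin 1).re = 0 ∧ (Bin 1).im = lam ∧
    (Bin 2).re = -(Real.sqrt 3 * lam / 2) ∧ (Bin 2).im = -(lam / 2) := by
  simp only [Bin, Matrix.cons_val, pow_two, Complex.mul_re, Complex.mul_im, jc_re, jc_im,
    Complex.ofReal_re, Complex.ofReal_im, Complex.I_re, Complex.I_im]
  refine ⟨?_, ?_, ?_, ?_, ?_, ?_⟩ <;> ring_nf
  rw [Real.sq_sqrt zero_le_three]; ring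

lemma Bin_injective : Function.Injective Bin := by
  obtain ⟨h0r, h0i, h1r, h1i, h2r, h2i⟩ := Bin_re_im
  have := mul_pos (Real.sqrt_pos.2 three_pos) lam_pos
  have := lam_pos
  intro i j h
  have hre := congrArg Complex.re h
  have him := congrArg Complex.im h
  fin_cases i <;> fin_cases j <;>
    simp only [Fin.zero_eta, Fin.mk_one, Fin.reduceFinMk] at hre him ⊢ <;>
    first | rfl | (simp only [*] at hre him; linarith)

lemma jc_mul_Bin (i : Fin 3) : jc * Bin i = Bin (i + 1) := by
  fin_cases i
  · show jc * (jc ^ 2 * ((lam : ℂ) * Complex.I)) = (lam : ℂ) * Complex.I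
    linear_combination (lam * Complex.I) * jc_pow_three
  · rfl
  · show jc * (jc * ((lam : ℂ) * Complex.I)) = jc ^ 2 * ((lam : ℂ) * Complex.I)
    ring

def rot : ℂ ≃ₗᵢ[ℝ] ℂ := rotation (Circle.exp (2 * Real.pi / 3))

lemma rot_apply (z : ℂ) : rot z = jc * z := by
  rw [rot, rotation_apply, Circle.coe_exp, jc_eq_exp_ofReal_mul_I]

lemma image_rot_Tri : rot '' Tri = Tri := by
  have h : ⇑rot.toLinearEquiv.toLinearMap = ⇑rot := rfl
  rw [Tri, ← h, LinearMap.image_convexHull, h]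
  simp only [Set.image_insert_eq, Set.image_singleton, rot_apply, jc_mul_Bin]
  congr 1
  ext z
  simp only [Fin.reduceAdd, Set.mem_insert_iff, Set.mem_singleton_iff]
  tauto

lemma rot_preimage_Tri : rot ⁻¹' Tri = Tri :=
  (Set.preimage_eq_iff_eq_image rot.bijective).2 image_rot_Tri.symm

lemma convex_halfPlane (a b r : ℝ) : Convex ℝ {z : ℂ | a * z.re + b * z.im ≤ r} :=
  convex_halfSpace_le ⟨fun x y => by simp only [Complex.add_re, Complex.add_im]; ring,
    fun c x => by simp only [Complex.real_smul, Complex.re_ofReal_mul, Complex.im_ofReal_mul,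
      smul_eq_mul]; ring⟩ r

lemma Tri_subset_halfPlanes : Tri ⊆ {z : ℂ | 0 * z.re + -1 * z.im ≤ lam / 2} ∩
    {z : ℂ | Real.sqrt 3 * z.re + 1 * z.im ≤ lam} ∩
    {z : ℂ | -Real.sqrt 3 * z.re + 1 * z.im ≤ lam} := by
  refine convexHull_min ?_ (((convex_halfPlane _ _ _).inter (convex_halfPlane _ _ _)).inter
    (convex_halfPlane _ _ _))
  obtain ⟨h0r, h0i, h1r, h1i, h2r, h2i⟩ := Bin_re_im
  have := lam_pos
  have := sqrt_three_mul_self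
  simp only [Set.insert_subset_iff, Set.singleton_subset_iff, Set.mem_inter_iff,
    Set.mem_ofPred_eq, h0r, h0i, h1r, h1i, h2r, h2i]
  refine ⟨⟨⟨?_, ?_⟩, ?_⟩, ⟨⟨?_, ?_⟩, ?_⟩, ⟨?_, ?_⟩, ?_⟩ <;> nlinarith

lemma Tri_subset_preimage_region : Tri ⊆ (fun z : ℂ => (z.im, z.re)) ⁻¹'
    {p : ℝ × ℝ | p.1 ∈ Set.Icc (-(lam / 2)) lam ∧
      p.2 ∈ Set.Icc (-((lam - p.1) / Real.sqrt 3)) ((lam - p.1) / Real.sqrt 3)} := by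
  intro z hz
  obtain ⟨⟨h1, h2⟩, h3⟩ := Tri_subset_halfPlanes hz
  simp only [Set.mem_ofPred_eq] at h1 h2 h3
  simp only [Set.mem_preimage, Set.mem_ofPred_eq, Set.mem_Icc, neg_le,
    le_div_iff₀ (Real.sqrt_pos.2 three_pos)]
  refine ⟨⟨?_, ?_⟩, ?_, ?_⟩ <;> linarith

lemma volume_Tri_le_one : volume Tri ≤ 1 := by
  set s := Real.sqrt 3
  have hs : 0 < s := Real.sqrt_pos.2 three_pos
  have hφ : MeasurePreserving (fun z : ℂ => (z.im, z.re)) volume (volume.prod volume) :=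
    Measure.measurePreserving_swap.comp Complex.volume_preserving_equiv_real_prod
  have hf : Measurable fun y => -((lam - y) / s) := by fun_prop
  have hg : Measurable fun y => (lam - y) / s := by fun_prop
  calc volume Tri ≤ _ := measure_mono Tri_subset_preimage_region
    _ = ∫⁻ y in Set.Icc (-(lam / 2)) lam,
          ENNReal.ofReal ((lam - y) / s - -((lam - y) / s)) := by
      rw [hφ.measure_preimage
        (measurableSet_region_between_cc hf hg measurableSet_Icc).nullMeasurableSet]
      exact volume_region_between_cc_eq_lintegral hf hg measurableSet_Icc
    _ = ENNReal.ofReal (∫ y in Set.Icc (-(lam / 2)) lam, ((lam - y) / s - -((lam - y) / s))) := by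
      refine (ofReal_integral_eq_lintegral_ofReal
        (by fun_prop : Continuous _).integrableOn_Icc ?_).symm
      filter_upwards [ae_restrict_mem measurableSet_Icc] with y hy
      have : 0 ≤ (lam - y) / s := div_nonneg (by linarith [hy.2]) hs.le
      simp only [Pi.zero_apply]
      linarith
    _ = 1 := by
      rw [integral_Icc_eq_integral_Ioc, ← intervalIntegral.integral_of_le (by linarith [lam_pos])]
      simp only [sub_neg_eq_add, ← two_mul, mul_div_assoc', mul_div_right_comm _ _ s,
        intervalIntegral.integral_const_mul,
        intervalIntegral.integral_comp_sub_left (fun y => y), integral_id]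
      rw [show (lam + lam / 2) ^ 2 - (lam - lam) ^ 2 = 9 / 4 * (lam * lam) by ring, lam_mul_self,
        ← ENNReal.ofReal_one]
      congr 1
      field_simp
      linear_combination -3 * sqrt_three_mul_self

lemma measurableSet_Tri : MeasurableSet Tri :=
  ((Set.toFinite _).isCompact_convexHull ℝ).isClosed.measurableSet

lemma volume_Tri_inter_voronoiCell_le : volume (Tri ∩ voronoiCell Bin 0) ≤ 1 / 3 := by
  set S := fun i => Tri ∩ voronoiCell Bin i
  have hS : ∀ i, MeasurableSet (S i) := fun i =>
    measurableSet_Tri.inter (isClosed_voronoiCell Bin i).measurableSet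
  have hrot : ∀ i, volume (S (i + 1)) = volume (S i) := fun i => by
    rw [← rot.measurePreserving.measure_preimage (hS _).nullMeasurableSet, Set.preimage_inter,
      rot_preimage_Tri, preimage_voronoiCell rot.isometry (σ := (· + 1))
        (fun j => ⟨j - 1, sub_add_cancel j 1⟩) (fun i => by rw [rot_apply, jc_mul_Bin]) i]
  have hunion : volume (⋃ i, S i) = ∑ i, volume (S i) := by
    rw [measure_iUnion₀ (fun i j hij =>
      (pairwise_aedisjoint_voronoiCell volume Bin_injective hij).mono Set.inter_subset_right
        Set.inter_subset_right) fun i => (hS i).nullMeasurableSet, tsum_fintype]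
  have hsum : ∑ i, volume (S i) ≤ 1 := hunion ▸
    (measure_mono (Set.iUnion_subset fun i => Set.inter_subset_left)).trans volume_Tri_le_one
  have h1 : volume (S 1) = volume (S 0) := hrot 0
  have h2 : volume (S 2) = volume (S 0) := (hrot 1).trans h1
  rw [Fin.sum_univ_three, h1, h2] at hsum
  rw [ENNReal.le_div_iff_mul_le (by norm_num) (by norm_num)]
  calc volume (S 0) * 3 = volume (S 0) + volume (S 0) + volume (S 0) := by ring
    _ ≤ 1 := hsum

lemma cell_zero_subset : cell 0 ⊆ Tri ∩ voronoiCell Bin 0 := by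
  rintro x ⟨⟨hxT, hxd⟩, -⟩
  exact ⟨hxT, fun m => hxd ▸ ciInf_le (Set.finite_range _).bddBelow m⟩

lemma volume_cell_zero_le : volume (cell 0) ≤ 1 / 3 :=
  (measure_mono cell_zero_subset).trans volume_Tri_inter_voronoiCell_le

lemma measureReal_cell_zero_le : volume.real (cell 0) ≤ 1 / 3 :=
  (ENNReal.toReal_mono (by norm_num) volume_cell_zero_le).trans (by norm_num)

instance : IsFiniteMeasure (volume.restrict (cell 0)) :=
  isFiniteMeasure_restrict.2 (ne_top_of_le_ne_top (by norm_num) volume_cell_zero_le)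

theorem lambda_third_lt_lambdaBar_general
    (c : ℂ → ℝ) (hc_meas : Measurable c)
    (hc_bdd : BddAbove (c '' Tri))
    (hnc : ¬ ∃ r : ℝ, ∀ᵐ x ∂(volume.restrict (cell 0)), c x = r) :
    ∀ θ : ℝ, 0 < θ →
      (0 < (∫ x in cell 0, Real.exp (θ * c x)) + 2 / 3
          - 3 * ∫ x in cell 0, Real.exp (θ * c x / 3)) ∧
        Lambda c (θ / 3) < LambdaBar c θ := by
  intro θ hθ
  obtain ⟨M, hM⟩ := hc_bdd
  have hθM : ∀ᵐ x ∂(volume.restrict (cell 0)), θ * c x ≤ θ * M :=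
    ae_mono (Measure.restrict_mono (cell_zero_subset.trans Set.inter_subset_left) le_rfl)
      (ae_restrict_of_forall_mem measurableSet_Tri fun x hx =>
        mul_le_mul_of_nonneg_left (hM ⟨x, hx, rfl⟩) hθ.le)
  have hθc : ¬ (fun x => θ * c x) =ᵐ[volume.restrict (cell 0)] 0 := fun h =>
    hnc ⟨0, h.mono fun x hx => (mul_eq_zero.1 hx).resolve_left hθ.ne'⟩
  have key := three_mul_integral_exp_div_three_lt (hc_meas.const_mul θ).aemeasurable hθM hθc
  rw [measureReal_restrict_apply_univ] at key
  have hvol := measureReal_cell_zero_le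
  have : NeZero (volume.restrict (cell 0)) := ⟨fun h => hθc (by simp [h, Filter.EventuallyEq])⟩
  have hpos : 0 < ∫ x in cell 0, Real.exp (θ * c x / 3) :=
    integral_exp_pos (integrable_exp_of_ae_le ((hc_meas.const_mul θ).div_const 3).aemeasurable
      (hθM.mono fun x hx => div_le_div_of_nonneg_right hx three_pos.le))
  refine ⟨by linarith, ?_⟩
  rw [Lambda, LambdaBar]
  simp_rw [show ∀ x, θ / 3 * c x = θ * c x / 3 from fun x => by ring]
  exact Real.log_lt_log (by linarith) (by linarith)

/-- **Strict inequality between the logarithmic moment generating functions** (inequality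
(4.2)): if `c` is not a.e. constant on `𝕋₁`, then for every `θ > 0`
`∫_{𝕋₁} e^{θc} + 2/3 − 3∫_{𝕋₁} e^{θc/3} > 0`; equivalently `Λ(θ/3) < Λ̄(θ)`. -/
theorem lambda_third_lt_lambdaBar
    (c : ℂ → ℝ) (hc_meas : Measurable c) (hc_nonneg : ∀ x, 0 ≤ c x)
    (hc_bdd : BddAbove (c '' Tri))
    (hnc : ¬ ∃ r : ℝ, ∀ᵐ x ∂(volume.restrict (cell 0)), c x = r) :
    ∀ θ : ℝ, 0 < θ →
      (0 < (∫ x in cell 0, Real.exp (θ * c x)) + 2 / 3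
          - 3 * ∫ x in cell 0, Real.exp (θ * c x / 3)) ∧
        Lambda c (θ / 3) < LambdaBar c θ :=
  lambda_third_lt_lambdaBar_general c hc_meas hc_bdd hnc

end LoadOpt
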